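/- arXiv:1312.6623 — 4 statements merged into one kernel-verified Lean document; each statement's English description precedes it below -/
import Mathlib

section
/- Let α, α', β, β' be complex numbers. Define sequences A, B : ℕ → ℂ by A(m) = ∑_{i+j=m} α^i α'^j and B(m) = ∑_{i+j=m} β^i β'^j (so that ∑ A(m)X^m = ((1-αX)(1-α'X))^{-1} and ∑ B(m)X^m = ((1-βX)(1-β'X))^{-1} as formal power series). Then in the formal power series ring ℂ[[X]] one has (∑_{m≥0} A(m)B(m) X^m) · (1-αβX)(1-αβ'X)(1-α'βX)(1-α'β'X) = 1 - αα'ββ' X². -/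
open PowerSeries Finset

/-! Write `c n = h n (α, α') * h n (β, β')` for the product of the complete homogeneous
polynomials. Since `h (n+1) (a, a') = a * h n + a' ^ (n+1) = a' * h n + a ^ (n+1)`, the sequence `c`
satisfies `c (n+2) - (αβ + α'β') c (n+1) + αβα'β' c n = (αβ') ^ (n+2) + (α'β) ^ (n+2)`. Hence
multiplying its generating function by `(1 - αβX)(1 - α'β'X)` leaves the two geometric series in
`αβ'` and `α'β` minus `1`, and the remaining two factors turn this into
`(1 - α'βX) + (1 - αβ'X) - (1 - αβ'X)(1 - α'βX) = 1 - αα'ββ'X²`. -/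

section
variable {R : Type*} [CommRing R]

theorem PowerSeries.coeff_zero_mul_one_sub_C_mul_X (φ : R⟦X⟧) (a : R) :
    coeff 0 (φ * (1 - C a * X)) = coeff 0 φ := by
  simp [mul_sub, ← mul_assoc]

theorem PowerSeries.coeff_succ_mul_one_sub_C_mul_X (φ : R⟦X⟧) (a : R) (n : ℕ) :
    coeff (n + 1) (φ * (1 - C a * X)) = coeff (n + 1) φ - a * coeff n φ := by
  rw [mul_sub, mul_one, ← mul_assoc, mul_comm φ, mul_assoc, map_sub, coeff_C_mul, coeff_succ_mul_X]

theorem PowerSeries.mk_pow_mul_one_sub_C_mul_X (a : R) :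
    PowerSeries.mk (a ^ ·) * (1 - C a * X) = 1 := by
  ext (_ | n)
  · simp [coeff_zero_mul_one_sub_C_mul_X]
  · simp [coeff_succ_mul_one_sub_C_mul_X, pow_succ']

def completeHomog (a a' : R) (n : ℕ) : R :=
  ∑ p ∈ antidiagonal n, a ^ p.1 * a' ^ p.2

theorem completeHomog_zero (a a' : R) : completeHomog a a' 0 = 1 := by
  simp [completeHomog]

theorem completeHomog_comm (a a' : R) (n : ℕ) : completeHomog a a' n = completeHomog a' a n := by
  unfold completeHomog
  rw [← Nat.sum_antidiagonal_swap]
  simp only [Prod.fst_swap, Prod.snd_swap, mul_comm]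

theorem completeHomog_succ (a a' : R) (n : ℕ) :
    completeHomog a a' (n + 1) = a * completeHomog a a' n + a' ^ (n + 1) := by
  rw [completeHomog, Nat.sum_antidiagonal_succ, completeHomog, mul_sum, add_comm]
  simp only [pow_zero, one_mul, pow_succ', mul_assoc]

theorem completeHomog_succ' (a a' : R) (n : ℕ) :
    completeHomog a a' (n + 1) = a' * completeHomog a a' n + a ^ (n + 1) := by
  rw [completeHomog_comm, completeHomog_succ, completeHomog_comm]

theorem completeHomog_one (a a' : R) : completeHomog a a' 1 = a + a' := by
  simp [completeHomog_succ, completeHomog_zero]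

theorem completeHomog_mul_completeHomog_add_two (a a' b b' : R) (n : ℕ) :
    completeHomog a a' (n + 2) * completeHomog b b' (n + 2)
      - (a * b + a' * b') * (completeHomog a a' (n + 1) * completeHomog b b' (n + 1))
      + a * b * (a' * b') * (completeHomog a a' n * completeHomog b b' n)
      = (a * b') ^ (n + 2) + (a' * b) ^ (n + 2) := by
  have hA : a * completeHomog a a' n + a' ^ (n + 1) = a' * completeHomog a a' n + a ^ (n + 1) := by
    rw [← completeHomog_succ, ← completeHomog_succ']
  have hB : b * completeHomog b b' n + b' ^ (n + 1) = b' * completeHomog b b' n + b ^ (n + 1) := by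
    rw [← completeHomog_succ, ← completeHomog_succ']
  rw [completeHomog_succ a a' (n + 1), completeHomog_succ b b' (n + 1), completeHomog_succ a a' n,
    completeHomog_succ b b' n]
  linear_combination a * b' ^ (n + 2) * hA + b * a' ^ (n + 2) * hB

theorem mk_completeHomog_mul_completeHomog_mul (a a' b b' : R) :
    PowerSeries.mk (fun n => completeHomog a a' n * completeHomog b b' n)
        * ((1 - C (a * b) * X) * (1 - C (a' * b') * X))
      = PowerSeries.mk ((a * b') ^ ·) + PowerSeries.mk ((a' * b) ^ ·) - 1 := by
  rw [← mul_assoc]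
  ext (_ | _ | n)
  · simp only [coeff_zero_mul_one_sub_C_mul_X, coeff_mk, completeHomog_zero, map_sub, map_add,
      coeff_one, if_true]
    ring
  · rw [coeff_succ_mul_one_sub_C_mul_X, coeff_succ_mul_one_sub_C_mul_X,
      coeff_zero_mul_one_sub_C_mul_X]
    simp only [coeff_mk, completeHomog_one, completeHomog_zero, map_sub, map_add, coeff_one,
      one_ne_zero, if_false, zero_add, pow_one]
    ring
  · simp only [coeff_succ_mul_one_sub_C_mul_X, coeff_mk, map_sub, map_add, coeff_one,
      Nat.add_eq_zero_iff, one_ne_zero, and_false, if_false]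
    linear_combination completeHomog_mul_completeHomog_add_two a a' b b' n
end

theorem stmt_0 (α α' β β' : ℂ) :
    (PowerSeries.mk fun m : ℕ =>
        (∑ p ∈ Finset.HasAntidiagonal.antidiagonal m, α ^ p.1 * α' ^ p.2) *
        (∑ p ∈ Finset.HasAntidiagonal.antidiagonal m, β ^ p.1 * β' ^ p.2)) *
      ((1 - PowerSeries.C (α * β) * PowerSeries.X) *
       (1 - PowerSeries.C (α * β') * PowerSeries.X) *
       (1 - PowerSeries.C (α' * β) * PowerSeries.X) *
       (1 - PowerSeries.C (α' * β') * PowerSeries.X)) =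
    1 - PowerSeries.C (α * α' * β * β') * PowerSeries.X ^ 2 := by
  have h := mk_completeHomog_mul_completeHomog_mul α α' β β'
  have g₁ := mk_pow_mul_one_sub_C_mul_X (α * β')
  have g₂ := mk_pow_mul_one_sub_C_mul_X (α' * β)
  simp only [completeHomog, map_mul] at h g₁ g₂ ⊢
  linear_combination (1 - C α * C β' * X) * (1 - C α' * C β * X) * h
    + (1 - C α' * C β * X) * g₁ + (1 - C α * C β' * X) * g₂
end

section
/- Let A, B : ℕ≥1 → ℂ be multiplicative arithmetic functions (A(1)=1, A(mn)=A(m)A(n) for coprime m,n, and likewise for B) such that for every prime p there are complex numbers α_p, α'_p, β_p, β'_p with A(p^m) = ∑_{i+j=m} α_p^i (α'_p)^j and B(p^m) = ∑_{i+j=m} β_p^i (β'_p)^j for all m ≥ 0, and suppose there are real numbers a, b with |α_p|, |α'_p| ≤ p^a and |β_p|, |β'_p| ≤ p^b for all primes p. Then for every complex s with Re(s) > a + b + 2, the Dirichlet series ∑_{n=1}^∞ A(n)B(n) n^{-s} converges absolutely, the product over all primes p of (1 - α_p α'_p β_p β'_p p^{-2s}) · [(1-α_pβ_p p^{-s})(1-α_pβ'_p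 p^{-s})(1-α'_pβ_p p^{-s})(1-α'_pβ'_p p^{-s})]^{-1} converges, and the two are equal. -/
/-!
Write `h_m(α, α') = ∑_{i+j=m} α^i α'^j`. Multiplicativity and `|h_m(α, α')| ≤ (m+1) p^{am}` give
`|A(n)| ≤ d(n) n^a`, and `d(n)² ≤ 16 n`, so `|A(n) B(n)| ≤ 16 n^{a+b+1}` and the Dirichlet series
converges absolutely for `Re s > a + b + 2`. The Euler product of the multiplicative function
`A B n^{-s}` then reduces the theorem to the local identity
`∑ h_m(α, α') h_m(β, β') x^m = (1 - α α' β β' x²) / ∏ (1 - α_i β_j x)`.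
This follows from `h_{m+1}(α, α') = α h_m(α, α') + α'^{m+1}`, which expresses the series through
itself and the series `∑ h_m(α, α') y^m = 1 / ((1 - α y)(1 - α' y))`, a Cauchy product of two
geometric series.
-/

open Finset

section Algebra

variable {R : Type*} [CommSemiring R]

def hsymm (α α' : R) (m : ℕ) : R := ∑ ij ∈ antidiagonal m, α ^ ij.1 * α' ^ ij.2

@[simp] lemma hsymm_zero (α α' : R) : hsymm α α' 0 = 1 := by simp [hsymm]

lemma hsymm_succ (α α' : R) (m : ℕ) :
    hsymm α α' (m + 1) = α * hsymm α α' m + α' ^ (m + 1) := by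
  rw [hsymm, Nat.sum_antidiagonal_succ, hsymm, mul_sum, add_comm]
  simp only [pow_zero, one_mul, pow_succ']
  exact congrArg (· + _) (sum_congr rfl fun ij _ => by ring)

lemma hsymm_mul_pow (α α' y : R) (m : ℕ) :
    hsymm α α' m * y ^ m = ∑ ij ∈ antidiagonal m, (α * y) ^ ij.1 * (α' * y) ^ ij.2 := by
  rw [hsymm, sum_mul]
  refine sum_congr rfl fun ij hij => ?_
  rw [← mem_antidiagonal.mp hij]
  ring

end Algebra

lemma card_divisors_le_two_mul_sqrt_add_one (n : ℕ) : #n.divisors ≤ 2 * (n.sqrt + 1) := by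
  have hsub : n.divisors ⊆ range (n.sqrt + 1) ∪ (range (n.sqrt + 1)).image (n / ·) := by
    intro d hd
    obtain ⟨⟨e, rfl⟩, hn⟩ := Nat.mem_divisors.mp hd
    rcases le_or_gt d (d * e).sqrt with h | h
    · exact mem_union_left _ (mem_range.mpr (Nat.lt_succ_of_le h))
    · refine mem_union_right _ (mem_image.mpr ⟨e, mem_range.mpr ?_, ?_⟩)
      · by_contra! he
        exact (Nat.mul_le_mul h he).not_gt (Nat.lt_succ_sqrt _)
      · exact Nat.mul_div_cancel d (Nat.pos_of_ne_zero (right_ne_zero_of_mul hn))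
  calc #n.divisors ≤ #(range (n.sqrt + 1)) + #((range (n.sqrt + 1)).image (n / ·)) :=
        (card_le_card hsub).trans (card_union_le _ _)
    _ ≤ 2 * (n.sqrt + 1) := by
        have := card_image_le (s := range (n.sqrt + 1)) (f := (n / ·))
        rw [card_range] at *
        omega

lemma card_divisors_sq_le {n : ℕ} (hn : n ≠ 0) : #n.divisors ^ 2 ≤ 16 * n := by
  have h := card_divisors_le_two_mul_sqrt_add_one n
  have hs : 0 < n.sqrt := Nat.sqrt_pos.mpr (Nat.pos_of_ne_zero hn)
  have := Nat.sqrt_le' n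
  nlinarith

section Analysis

variable {𝕜 : Type*} [NormedField 𝕜]

lemma norm_hsymm_le {α α' : 𝕜} {r : ℝ} (hα : ‖α‖ ≤ r) (hα' : ‖α'‖ ≤ r) (m : ℕ) :
    ‖hsymm α α' m‖ ≤ (m + 1) * r ^ m := by
  have hr : 0 ≤ r := (norm_nonneg α).trans hα
  calc ‖hsymm α α' m‖ ≤ ∑ ij ∈ antidiagonal m, ‖α‖ ^ ij.1 * ‖α'‖ ^ ij.2 := by
        refine (norm_sum_le _ _).trans_eq ?_
        simp only [norm_mul, norm_pow]
    _ ≤ ∑ ij ∈ antidiagonal m, r ^ m := sum_le_sum fun ij hij => by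
        rw [← mem_antidiagonal.mp hij, pow_add]
        gcongr
    _ = (m + 1) * r ^ m := by simp [Nat.card_antidiagonal]

lemma hasSum_hsymm_mul_pow [CompleteSpace 𝕜] {α α' y : 𝕜} (hα : ‖α * y‖ < 1)
    (hα' : ‖α' * y‖ < 1) :
    HasSum (fun m => hsymm α α' m * y ^ m) ((1 - α * y)⁻¹ * (1 - α' * y)⁻¹) := by
  have hg : Summable fun i => ‖(α * y) ^ i‖ := by
    simpa only [norm_pow] using summable_geometric_of_lt_one (norm_nonneg _) hα
  have hg' : Summable fun j => ‖(α' * y) ^ j‖ := by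
    simpa only [norm_pow] using summable_geometric_of_lt_one (norm_nonneg _) hα'
  have h := (summable_norm_sum_mul_antidiagonal_of_summable_norm hg hg').of_norm.hasSum
  rw [← tsum_mul_tsum_eq_tsum_sum_antidiagonal_of_summable_norm hg hg',
    tsum_geometric_of_norm_lt_one hα, tsum_geometric_of_norm_lt_one hα'] at h
  simpa only [hsymm_mul_pow] using h

lemma one_sub_ne_zero_of_norm_lt_one {u : 𝕜} (hu : ‖u‖ < 1) : 1 - u ≠ 0 :=
  sub_ne_zero.mpr fun h => by simp [← h] at hu

lemma tsum_hsymm_mul_hsymm_mul_pow [CompleteSpace 𝕜] {α α' β β' x : 𝕜}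
    (hs : Summable fun m => hsymm α α' m * hsymm β β' m * x ^ m)
    (h₀ : ‖α * β * x‖ < 1) (h₁ : ‖α * β' * x‖ < 1) (h₂ : ‖α' * β * x‖ < 1)
    (h₃ : ‖α' * β' * x‖ < 1) :
    ∑' m, hsymm α α' m * hsymm β β' m * x ^ m = (1 - α * α' * β * β' * x ^ 2) *
      ((1 - α * β * x) * (1 - α * β' * x) * (1 - α' * β * x) * (1 - α' * β' * x))⁻¹ := by
  have e₁ : α * β' * x = α * (β' * x) := mul_assoc _ _ _
  have e₂ : α' * β * x = β * (α' * x) := by ring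
  have e₃ : α' * β' * x = α' * (β' * x) := mul_assoc _ _ _
  have e₄ : α' * β' * x = β' * (α' * x) := by ring
  have hT₁ : HasSum (fun m => hsymm α α' m * (β' * x) ^ m)
      ((1 - α * β' * x)⁻¹ * (1 - α' * β' * x)⁻¹) := by
    rw [e₁, e₃]; exact hasSum_hsymm_mul_pow (e₁ ▸ h₁) (e₃ ▸ h₃)
  have hT₂ : HasSum (fun m => hsymm β β' m * (α' * x) ^ m)
      ((1 - α' * β * x)⁻¹ * (1 - α' * β' * x)⁻¹) := by
    rw [e₂, e₄]; exact hasSum_hsymm_mul_pow (e₂ ▸ h₂) (e₄ ▸ h₃)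
  have hrec := (((hs.hasSum.mul_left (α * β * x)).add (hT₁.mul_left (α * β' * x))).add
    (hT₂.mul_left (α' * β * x))).add ((hasSum_geometric_of_norm_lt_one h₃).mul_left (α' * β' * x))
  have hterm (m : ℕ) : hsymm α α' (m + 1) * hsymm β β' (m + 1) * x ^ (m + 1) =
      α * β * x * (hsymm α α' m * hsymm β β' m * x ^ m) +
        α * β' * x * (hsymm α α' m * (β' * x) ^ m) + α' * β * x * (hsymm β β' m * (α' * x) ^ m) +
        α' * β' * x * (α' * β' * x) ^ m := by
    simp only [hsymm_succ]; ring
  have hshift := (hasSum_nat_add_iff' 1).mpr hs.hasSum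
  simp only [sum_range_one, hsymm_zero, pow_zero, mul_one, hterm] at hshift
  have hS := hshift.unique hrec
  have n₀ := one_sub_ne_zero_of_norm_lt_one h₀
  have n₁ := one_sub_ne_zero_of_norm_lt_one h₁
  have n₂ := one_sub_ne_zero_of_norm_lt_one h₂
  have n₃ := one_sub_ne_zero_of_norm_lt_one h₃
  rw [eq_mul_inv_iff_mul_eq₀ (by simp only [ne_eq, mul_eq_zero, not_or]; tauto)]
  have k₁ := mul_inv_cancel₀ n₁
  have k₂ := mul_inv_cancel₀ n₂
  have k₃ := mul_inv_cancel₀ n₃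
  -- multiply `hS` by the three factors other than `1 - αβx`; the `kᵢ` cancel the inverses
  linear_combination (1 - α * β' * x) * (1 - α' * β * x) * (1 - α' * β' * x) * hS
    + α * β' * x * (1 - α' * β * x) * ((1 - α' * β' * x) * (1 - α' * β' * x)⁻¹) * k₁
    + α * β' * x * (1 - α' * β * x) * k₃
    + α' * β * x * (1 - α * β' * x) * ((1 - α' * β' * x) * (1 - α' * β' * x)⁻¹) * k₂
    + α' * β * x * (1 - α * β' * x) * k₃
    + α' * β' * x * (1 - α * β' * x) * (1 - α' * β * x) * k₃

lemma norm_le_card_divisors_mul_rpow {A : ℕ → 𝕜} (hA₁ : A 1 = 1)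
    (hAmul : ∀ m n : ℕ, Nat.Coprime m n → A (m * n) = A m * A n) {α α' : ℕ → 𝕜}
    (hAp : ∀ p : ℕ, p.Prime → ∀ m : ℕ, A (p ^ m) = hsymm (α p) (α' p) m) {a : ℝ}
    (hα : ∀ p : ℕ, p.Prime → ‖α p‖ ≤ (p : ℝ) ^ a ∧ ‖α' p‖ ≤ (p : ℝ) ^ a) {n : ℕ} (hn : n ≠ 0) :
    ‖A n‖ ≤ #n.divisors * (n : ℝ) ^ a := by
  induction n using Nat.recOnPosPrimePosCoprime with
  | zero => exact absurd rfl hn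
  | one => simp [hA₁]
  | prime_pow p k hp _ =>
    rw [hAp p hp k, Nat.divisors_prime_pow hp, card_map, card_range, Nat.cast_pow,
      ← Real.rpow_pow_comm (Nat.cast_nonneg p)]
    exact_mod_cast norm_hsymm_le (hα p hp).1 (hα p hp).2 k
  | coprime m n hm hn' hmn ihm ihn =>
    rw [hAmul m n hmn, norm_mul, Nat.Coprime.card_divisors_mul hmn, Nat.cast_mul, Nat.cast_mul,
      Real.mul_rpow (Nat.cast_nonneg m) (Nat.cast_nonneg n)]
    calc ‖A m‖ * ‖A n‖ ≤ (#m.divisors * (m : ℝ) ^ a) * (#n.divisors * (n : ℝ) ^ a) :=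
          mul_le_mul (ihm (by omega)) (ihn (by omega)) (norm_nonneg _) (by positivity)
      _ = _ := by ring

lemma norm_mul_le_of_le_card_divisors_mul_rpow {u v : 𝕜} {n : ℕ}
    (hn : n ≠ 0) {a b : ℝ} (hu : ‖u‖ ≤ #n.divisors * (n : ℝ) ^ a)
    (hv : ‖v‖ ≤ #n.divisors * (n : ℝ) ^ b) : ‖u * v‖ ≤ 16 * (n : ℝ) ^ (a + b + 1) := by
  have hn₀ : (0 : ℝ) < n := by exact_mod_cast Nat.pos_of_ne_zero hn
  have hd : (#n.divisors : ℝ) ^ 2 ≤ 16 * n := by exact_mod_cast card_divisors_sq_le hn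
  calc ‖u * v‖ ≤ (#n.divisors * (n : ℝ) ^ a) * (#n.divisors * (n : ℝ) ^ b) := by
        rw [norm_mul]; exact mul_le_mul hu hv (norm_nonneg _) (by positivity)
    _ = (#n.divisors : ℝ) ^ 2 * ((n : ℝ) ^ a * (n : ℝ) ^ b) := by ring
    _ ≤ 16 * n * ((n : ℝ) ^ a * (n : ℝ) ^ b) := by gcongr
    _ = 16 * (n : ℝ) ^ (a + b + 1) := by
        rw [Real.rpow_add hn₀, Real.rpow_add hn₀, Real.rpow_one]; ring

end Analysis

namespace LSeries

lemma term_mul_of_coprime {f : ℕ → ℂ}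
    (hmul : ∀ m n : ℕ, Nat.Coprime m n → f (m * n) = f m * f n) (s : ℂ) {m n : ℕ}
    (hmn : Nat.Coprime m n) : term f s (m * n) = term f s m * term f s n := by
  rcases eq_or_ne m 0 with rfl | hm
  · simp [(Nat.coprime_zero_left n).mp hmn]
  rcases eq_or_ne n 0 with rfl | hn
  · simp
  rw [term_of_ne_zero (mul_ne_zero hm hn), term_of_ne_zero hm, term_of_ne_zero hn, hmul m n hmn,
    Nat.cast_mul, Complex.natCast_mul_natCast_cpow, mul_div_mul_comm]

lemma term_pow {p : ℕ} (hp : p ≠ 0) (f : ℕ → ℂ) (s : ℂ) (e : ℕ) :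
    term f s (p ^ e) = f (p ^ e) * ((p : ℂ) ^ (-s)) ^ e := by
  rw [term_of_ne_zero (pow_ne_zero _ hp), div_eq_mul_inv, ← Complex.cpow_neg, Nat.cast_pow,
    ← Complex.natCast_cpow_natCast_mul, Complex.cpow_nat_mul]

end LSeries

lemma norm_mul_mul_natCast_cpow_neg_lt_one {p : ℕ} (hp : 1 < p) {u v s : ℂ} {a b : ℝ}
    (hu : ‖u‖ ≤ (p : ℝ) ^ a) (hv : ‖v‖ ≤ (p : ℝ) ^ b) (hs : a + b < s.re) :
    ‖u * v * (p : ℂ) ^ (-s)‖ < 1 := by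
  have hp₀ : (0 : ℝ) < p := by exact_mod_cast zero_lt_one.trans hp
  rw [norm_mul, norm_mul, Complex.norm_natCast_cpow_of_pos (by omega), Complex.neg_re]
  calc ‖u‖ * ‖v‖ * (p : ℝ) ^ (-s.re) ≤ (p : ℝ) ^ a * (p : ℝ) ^ b * (p : ℝ) ^ (-s.re) := by
        gcongr
    _ = (p : ℝ) ^ (a + b - s.re) := by
        rw [← Real.rpow_add hp₀, ← Real.rpow_add hp₀, sub_eq_add_neg]
    _ < 1 := Real.rpow_lt_one_of_one_lt_of_neg (by exact_mod_cast hp) (by linarith)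

open LSeries

theorem stmt_1 (A B : ℕ → ℂ)
    (hA1 : A 1 = 1) (hB1 : B 1 = 1)
    (hAmul : ∀ m n : ℕ, Nat.Coprime m n → A (m * n) = A m * A n)
    (hBmul : ∀ m n : ℕ, Nat.Coprime m n → B (m * n) = B m * B n)
    (α α' β β' : ℕ → ℂ)
    (hAp : ∀ p : ℕ, p.Prime → ∀ m : ℕ,
      A (p ^ m) = ∑ ij ∈ Finset.HasAntidiagonal.antidiagonal m, (α p) ^ ij.1 * (α' p) ^ ij.2)
    (hBp : ∀ p : ℕ, p.Prime → ∀ m : ℕ,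
      B (p ^ m) = ∑ ij ∈ Finset.HasAntidiagonal.antidiagonal m, (β p) ^ ij.1 * (β' p) ^ ij.2)
    (a b : ℝ)
    (hα : ∀ p : ℕ, p.Prime → ‖α p‖ ≤ (p : ℝ) ^ a ∧ ‖α' p‖ ≤ (p : ℝ) ^ a)
    (hβ : ∀ p : ℕ, p.Prime → ‖β p‖ ≤ (p : ℝ) ^ b ∧ ‖β' p‖ ≤ (p : ℝ) ^ b) :
    ∀ s : ℂ, a + b + 2 < s.re →
      Summable (fun n : ℕ => ‖A (n + 1) * B (n + 1) * ((n + 1 : ℕ) : ℂ) ^ (-s)‖) ∧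
      Multipliable (fun p : Nat.Primes =>
        (1 - α p.1 * α' p.1 * β p.1 * β' p.1 * (p.1 : ℂ) ^ (-(2 * s))) *
          ((1 - α p.1 * β p.1 * (p.1 : ℂ) ^ (-s)) * (1 - α p.1 * β' p.1 * (p.1 : ℂ) ^ (-s)) *
           (1 - α' p.1 * β p.1 * (p.1 : ℂ) ^ (-s)) * (1 - α' p.1 * β' p.1 * (p.1 : ℂ) ^ (-s)))⁻¹) ∧
      (∑' n : ℕ, A (n + 1) * B (n + 1) * ((n + 1 : ℕ) : ℂ) ^ (-s)) =
        ∏' p : Nat.Primes,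
          (1 - α p.1 * α' p.1 * β p.1 * β' p.1 * (p.1 : ℂ) ^ (-(2 * s))) *
            ((1 - α p.1 * β p.1 * (p.1 : ℂ) ^ (-s)) * (1 - α p.1 * β' p.1 * (p.1 : ℂ) ^ (-s)) *
             (1 - α' p.1 * β p.1 * (p.1 : ℂ) ^ (-s)) * (1 - α' p.1 * β' p.1 * (p.1 : ℂ) ^ (-s)))⁻¹ := by
  intro s hs
  set f : ℕ → ℂ := fun n => A n * B n
  have hnorm : Summable (‖term f s ·‖) := by
    refine summable_norm_iff.mpr (LSeriesSummable_of_le_const_mul_rpow hs ⟨16, fun n hn => ?_⟩)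
    rw [show a + b + 2 - 1 = a + b + 1 by ring]
    exact norm_mul_le_of_le_card_divisors_mul_rpow hn
      (norm_le_card_divisors_mul_rpow hA1 hAmul hAp hα hn)
      (norm_le_card_divisors_mul_rpow hB1 hBmul hBp hβ hn)
  have heuler := EulerProduct.eulerProduct_hasProd (by simp [f, hA1, hB1])
    (term_mul_of_coprime (fun m n h => by simp only [f, hAmul m n h, hBmul m n h]; ring) s)
    hnorm (term_zero f s)
  have hlocal (p : Nat.Primes) : ∑' e, term f s (p.1 ^ e) =
      (1 - α p.1 * α' p.1 * β p.1 * β' p.1 * (p.1 : ℂ) ^ (-(2 * s))) *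
        ((1 - α p.1 * β p.1 * (p.1 : ℂ) ^ (-s)) * (1 - α p.1 * β' p.1 * (p.1 : ℂ) ^ (-s)) *
         (1 - α' p.1 * β p.1 * (p.1 : ℂ) ^ (-s)) * (1 - α' p.1 * β' p.1 * (p.1 : ℂ) ^ (-s)))⁻¹ := by
    have hp := p.2
    have he (e : ℕ) : term f s (p.1 ^ e) =
        hsymm (α p) (α' p) e * hsymm (β p) (β' p) e * ((p.1 : ℂ) ^ (-s)) ^ e := by
      rw [term_pow hp.ne_zero]
      simp only [f, hAp p hp, hBp p hp, hsymm]
    have hx {u v : ℂ} (hu : ‖u‖ ≤ (p.1 : ℝ) ^ a) (hv : ‖v‖ ≤ (p.1 : ℝ) ^ b) :=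
      norm_mul_mul_natCast_cpow_neg_lt_one hp.one_lt hu hv (s := s) (by linarith)
    rw [tsum_congr he, show -(2 * s) = (2 : ℕ) * -s by push_cast; ring, Complex.cpow_nat_mul]
    exact tsum_hsymm_mul_hsymm_mul_pow
      ((hnorm.comp_injective (Nat.pow_right_injective hp.two_le)).of_norm.congr he)
      (hx (hα p hp).1 (hβ p hp).1) (hx (hα p hp).1 (hβ p hp).2)
      (hx (hα p hp).2 (hβ p hp).1) (hx (hα p hp).2 (hβ p hp).2)
  have hterm (n : ℕ) : A (n + 1) * B (n + 1) * ((n + 1 : ℕ) : ℂ) ^ (-s) = term f s (n + 1) := by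
    rw [term_of_ne_zero n.succ_ne_zero, Complex.cpow_neg, div_eq_mul_inv]
  simp only [hterm, funext hlocal] at heuler ⊢
  refine ⟨(summable_nat_add_iff 1).mpr hnorm, heuler.multipliable, ?_⟩
  rw [heuler.tprod_eq, hnorm.of_norm.tsum_eq_zero_add, term_zero, zero_add]
end

section
/- For y > 0 and complex numbers α, β with Re(β) > 0 and Re(α) < 1, one has Γ(1-α) · ∫₀^∞ (u+1)^{α-1} u^{β-1} e^{-yu} du = y^{1-α-β} · Γ(β) · ∫₀^∞ (u+1)^{-β} u^{-α} e^{-yu} du, both integrals being absolutely convergent. (This is the functional equation W(y, α, β) = y^{1-α-β} W(y, 1-β, 1-α) of the Whittaker-type function W(y, α, β) = Γ(β)^{-1} ∫₀^∞ (u+1)^{α-1} u^{β-1} e^{-yu} du, valid on the region where both integrals converge.) -/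
/-!
For `u > -1`, `Γ(1 - α) (u + 1)^(α - 1) = ∫₀^∞ t^(-α) e^(-(u + 1) t) dt`. Substituting this into
the left-hand side and exchanging the order of integration (the double integrand is dominated by
`u^(Re β - 1) e^(-y u) · t^(-Re α) e^(-t)`), the inner `u`-integral is again a Gamma integral,
`Γ(β) (y + t)^(-β)`. What remains is `Γ(β) ∫₀^∞ t^(-α) (y + t)^(-β) e^(-t) dt`, and the
substitution `t = y s` turns it into the right-hand side.
-/

open MeasureTheory Set

lemma integral_cpow_mul_exp_neg_mul_Ioi' {a : ℂ} {r : ℝ} (ha : 0 < a.re) (hr : 0 < r) :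
    ∫ t in Ioi (0 : ℝ), (t : ℂ) ^ (a - 1) * Complex.exp (-(r : ℂ) * t) =
      (r : ℂ) ^ (-a) * Complex.Gamma a := by
  have harg : (r : ℂ).arg ≠ Real.pi := by
    rw [Complex.arg_ofReal_of_nonneg hr.le]
    exact Real.pi_ne_zero.symm
  simp_rw [neg_mul]
  rw [Complex.integral_cpow_mul_exp_neg_mul_Ioi ha hr, one_div, Complex.inv_cpow _ _ harg,
    Complex.cpow_neg]

lemma integrableOn_cpow_mul_exp_neg_mul {y : ℝ} (hy : 0 < y) {b : ℂ} (hb : -1 < b.re) :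
    IntegrableOn (fun u : ℝ => (u : ℂ) ^ b * Complex.exp (-(y : ℂ) * u)) (Ioi 0) := by
  refine Integrable.mono' (integrableOn_rpow_mul_exp_neg_mul_rpow hb one_pos hy)
    (by fun_prop : Measurable _).aestronglyMeasurable ?_
  filter_upwards [ae_restrict_mem measurableSet_Ioi] with u (hu : 0 < u)
  rw [norm_mul, Complex.norm_cpow_eq_rpow_re_of_pos hu, Complex.norm_exp, Real.rpow_one]
  simp

lemma integrableOn_add_one_cpow_mul_cpow_mul_exp_neg_mul {y : ℝ} (hy : 0 < y) {a b : ℂ}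
    (ha : a.re ≤ 0) (hb : -1 < b.re) :
    IntegrableOn (fun u : ℝ => ((u : ℂ) + 1) ^ a * (u : ℂ) ^ b * Complex.exp (-(y : ℂ) * u))
      (Ioi 0) := by
  refine Integrable.mono (integrableOn_cpow_mul_exp_neg_mul hy hb) ?_ ?_
  · exact Measurable.aestronglyMeasurable (by fun_prop)
  filter_upwards [ae_restrict_mem measurableSet_Ioi] with u (hu : 0 < u)
  have hcast : (u : ℂ) + 1 = ((u + 1 : ℝ) : ℂ) := by push_cast; rfl
  have hle : ‖((u : ℂ) + 1) ^ a‖ ≤ 1 := by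
    rw [hcast, Complex.norm_cpow_eq_rpow_re_of_pos (by linarith)]
    exact Real.rpow_le_one_of_one_le_of_nonpos (by linarith) ha
  rw [mul_assoc, norm_mul]
  exact mul_le_of_le_one_left (norm_nonneg _) hle

lemma integrable_prod_mul_mul_exp_neg_mul {g h : ℝ → ℂ} (hg : IntegrableOn g (Ioi 0))
    (hh : IntegrableOn h (Ioi 0)) :
    Integrable (fun p : ℝ × ℝ => g p.1 * h p.2 * Complex.exp (-(p.1 : ℂ) * p.2))
      ((volume.restrict (Ioi 0)).prod (volume.restrict (Ioi 0))) := by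
  refine Integrable.mono (hg.mul_prod hh) ?_ ?_
  · exact (hg.mul_prod hh).aestronglyMeasurable.mul
      (Measurable.aestronglyMeasurable (by fun_prop))
  rw [Measure.prod_restrict]
  filter_upwards [ae_restrict_mem (measurableSet_Ioi.prod measurableSet_Ioi)]
    with ⟨u, t⟩ ⟨hu, ht⟩
  have hle : ‖Complex.exp (-(u : ℂ) * t)‖ ≤ 1 := by
    rw [Complex.norm_exp, Real.exp_le_one_iff]
    simpa using mul_nonneg (le_of_lt hu) (le_of_lt ht)
  rw [norm_mul]
  exact mul_le_of_le_one_right (norm_nonneg _) hle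

noncomputable def whittakerKernel (y : ℝ) (a b : ℂ) (u t : ℝ) : ℂ :=
  (u : ℂ) ^ (b - 1) * Complex.exp (-(y : ℂ) * u) * ((t : ℂ) ^ (a - 1) * Complex.exp (-(t : ℂ))) *
    Complex.exp (-(u : ℂ) * t)

section whittakerKernel

variable {y : ℝ} {a b : ℂ}

lemma integrable_whittakerKernel (hy : 0 < y) (ha : 0 < a.re) (hb : 0 < b.re) :
    Integrable (Function.uncurry (whittakerKernel y a b))
      ((volume.restrict (Ioi 0)).prod (volume.restrict (Ioi 0))) := by
  have hg : IntegrableOn (fun u : ℝ => (u : ℂ) ^ (b - 1) * Complex.exp (-(y : ℂ) * u))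
      (Ioi 0) :=
    integrableOn_cpow_mul_exp_neg_mul hy (by simpa using hb)
  have hh : IntegrableOn (fun t : ℝ => (t : ℂ) ^ (a - 1) * Complex.exp (-(t : ℂ))) (Ioi 0) := by
    simpa using integrableOn_cpow_mul_exp_neg_mul one_pos (b := a - 1) (by simpa using ha)
  simpa only [Function.uncurry_def, whittakerKernel] using
    integrable_prod_mul_mul_exp_neg_mul hg hh

lemma integral_whittakerKernel_fixed_fst (ha : 0 < a.re) {u : ℝ} (hu : 0 < u) :
    ∫ t in Ioi (0 : ℝ), whittakerKernel y a b u t =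
      Complex.Gamma a *
        (((u : ℂ) + 1) ^ (-a) * (u : ℂ) ^ (b - 1) * Complex.exp (-(y : ℂ) * u)) := by
  have hexp : ∀ t : ℝ, Complex.exp (-(t : ℂ)) * Complex.exp (-(u : ℂ) * t) =
      Complex.exp (-((u + 1 : ℝ) : ℂ) * t) := by
    intro t
    rw [← Complex.exp_add]; push_cast; ring_nf
  simp only [whittakerKernel, mul_assoc, hexp, integral_const_mul,
    integral_cpow_mul_exp_neg_mul_Ioi' ha (by linarith : 0 < u + 1)]
  push_cast
  ring

lemma integral_whittakerKernel_fixed_snd (hy : 0 < y) (hb : 0 < b.re) {t : ℝ} (ht : 0 < t) :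
    ∫ u in Ioi (0 : ℝ), whittakerKernel y a b u t =
      Complex.Gamma b *
        ((t : ℂ) ^ (a - 1) * ((y : ℂ) + t) ^ (-b) * Complex.exp (-(t : ℂ))) := by
  have hK : ∀ u, whittakerKernel y a b u t = (t : ℂ) ^ (a - 1) * Complex.exp (-(t : ℂ)) *
      ((u : ℂ) ^ (b - 1) * Complex.exp (-((y + t : ℝ) : ℂ) * u)) := by
    intro u
    have hexp : Complex.exp (-((y + t : ℝ) : ℂ) * u) =
        Complex.exp (-(y : ℂ) * u) * Complex.exp (-(u : ℂ) * t) := by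
      rw [← Complex.exp_add]; push_cast; ring_nf
    rw [whittakerKernel, hexp]
    ring
  simp only [hK, integral_const_mul,
    integral_cpow_mul_exp_neg_mul_Ioi' hb (by linarith : 0 < y + t)]
  push_cast
  ring

lemma Gamma_mul_integral_add_one_cpow_mul_cpow_mul_exp_neg_mul (hy : 0 < y) (ha : 0 < a.re)
    (hb : 0 < b.re) :
    Complex.Gamma a * ∫ u in Ioi (0 : ℝ),
        ((u : ℂ) + 1) ^ (-a) * (u : ℂ) ^ (b - 1) * Complex.exp (-(y : ℂ) * u) =
      Complex.Gamma b * ∫ t in Ioi (0 : ℝ),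
        (t : ℂ) ^ (a - 1) * ((y : ℂ) + t) ^ (-b) * Complex.exp (-(t : ℂ)) :=
  calc Complex.Gamma a * ∫ u in Ioi (0 : ℝ),
        ((u : ℂ) + 1) ^ (-a) * (u : ℂ) ^ (b - 1) * Complex.exp (-(y : ℂ) * u)
      = ∫ u in Ioi (0 : ℝ), ∫ t in Ioi (0 : ℝ), whittakerKernel y a b u t := by
        rw [← integral_const_mul]
        exact (setIntegral_congr_fun measurableSet_Ioi
          fun _ hu ↦ integral_whittakerKernel_fixed_fst ha hu).symm
    _ = ∫ t in Ioi (0 : ℝ), ∫ u in Ioi (0 : ℝ), whittakerKernel y a b u t :=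
        integral_integral_swap (integrable_whittakerKernel hy ha hb)
    _ = _ := by
        rw [setIntegral_congr_fun measurableSet_Ioi
          fun _ ht ↦ integral_whittakerKernel_fixed_snd hy hb ht, integral_const_mul]

end whittakerKernel

lemma integral_cpow_mul_add_cpow_mul_exp_neg_Ioi {y : ℝ} (hy : 0 < y) (a b : ℂ) :
    ∫ t in Ioi (0 : ℝ), (t : ℂ) ^ a * ((y : ℂ) + t) ^ b * Complex.exp (-(t : ℂ)) =
      (y : ℂ) ^ (1 + a + b) *
        ∫ s in Ioi (0 : ℝ), ((s : ℂ) + 1) ^ b * (s : ℂ) ^ a * Complex.exp (-(y : ℂ) * s) := by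
  have hy0 : (y : ℂ) ≠ 0 := Complex.ofReal_ne_zero.mpr hy.ne'
  set g : ℝ → ℂ := fun t => (t : ℂ) ^ a * ((y : ℂ) + t) ^ b * Complex.exp (-(t : ℂ))
  have hscale : ∀ s ∈ Ioi (0 : ℝ), g (y * s) = (y : ℂ) ^ a * (y : ℂ) ^ b *
      (((s : ℂ) + 1) ^ b * (s : ℂ) ^ a * Complex.exp (-(y : ℂ) * s)) := by
    intro s (hs : 0 < s)
    have hya : ((y * s : ℝ) : ℂ) ^ a = (y : ℂ) ^ a * (s : ℂ) ^ a := by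
      push_cast
      exact Complex.mul_cpow_ofReal_nonneg hy.le hs.le a
    have hyb : (y : ℂ) + ((y * s : ℝ) : ℂ) = (y : ℂ) * ((s + 1 : ℝ) : ℂ) := by
      push_cast; ring
    simp only [g, hya, hyb, Complex.mul_cpow_ofReal_nonneg hy.le (by linarith : 0 ≤ s + 1)]
    push_cast
    ring_nf
  have hsub := integral_comp_mul_left_Ioi g 0 hy
  rw [mul_zero, setIntegral_congr_fun measurableSet_Ioi hscale, integral_const_mul,
    eq_inv_smul_iff₀ hy.ne'] at hsub
  rw [← hsub, Complex.real_smul, Complex.cpow_add _ _ hy0, Complex.cpow_add _ _ hy0,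
    Complex.cpow_one]
  ring

theorem stmt_8 (y : ℝ) (hy : 0 < y) (α β : ℂ) (hβ : 0 < β.re) (hα : α.re < 1) :
    IntegrableOn (fun u : ℝ =>
      ((u : ℂ) + 1) ^ (α - 1) * (u : ℂ) ^ (β - 1) * Complex.exp (-(y : ℂ) * u)) (Set.Ioi 0) ∧
    IntegrableOn (fun u : ℝ =>
      ((u : ℂ) + 1) ^ (-β) * (u : ℂ) ^ (-α) * Complex.exp (-(y : ℂ) * u)) (Set.Ioi 0) ∧
    Complex.Gamma (1 - α) *
        ∫ u in Set.Ioi (0 : ℝ),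
          ((u : ℂ) + 1) ^ (α - 1) * (u : ℂ) ^ (β - 1) * Complex.exp (-(y : ℂ) * u) =
      (y : ℂ) ^ (1 - α - β) * Complex.Gamma β *
        ∫ u in Set.Ioi (0 : ℝ),
          ((u : ℂ) + 1) ^ (-β) * (u : ℂ) ^ (-α) * Complex.exp (-(y : ℂ) * u) := by
  refine ⟨integrableOn_add_one_cpow_mul_cpow_mul_exp_neg_mul hy (by simpa using hα.le)
      (by simpa using hβ),
    integrableOn_add_one_cpow_mul_cpow_mul_exp_neg_mul hy (by simpa using hβ.le)
      (by simpa using hα), ?_⟩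
  have h1α : 0 < (1 - α).re := by simpa using hα
  have hswap := Gamma_mul_integral_add_one_cpow_mul_cpow_mul_exp_neg_mul hy h1α hβ
  rw [neg_sub, sub_sub_cancel_left, integral_cpow_mul_add_cpow_mul_exp_neg_Ioi hy] at hswap
  rw [hswap, show (1 : ℂ) + -α + -β = 1 - α - β by ring]
  ring
end

section
/- Let r be a nonnegative integer, y > 0, and α a complex number with Re(α) < 1. Then ∫₀^∞ (u+1)^r u^{-α} e^{-yu} du = Γ(1-α) · ∑_{i=0}^{r} (-1)^i · binom(r,i) · (∏_{j=1}^{i} (α - j)) · y^{α-1-i}, the integral being absolutely convergent. (Equivalently, the analytically continued Whittaker function at a nonpositive integer second index satisfies W(y, α, -r) = ∑_{i=0}^{r} (-1)^i binom(r,i) (Γ(α)/Γ(α-i)) y^{r-i}, since Γ(α)/Γ(α-i) = ∏_{j=1}^{i}(α-j).) -/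
/-!
Expanding `(u + 1) ^ r` binomially reduces the integral to the Gamma integrals
`∫₀^∞ u ^ (i - α) e^{-yu} du = Γ(i + 1 - α) y ^ (α - 1 - i)`, which converge since
`Re (i - α) > -1`. The functional equation of `Γ` then gives
`Γ(i + 1 - α) = Γ(1 - α) (1 - α) ⋯ (i - α) = Γ(1 - α) (-1) ^ i ∏_{j=1}^{i} (α - j)`.
-/

open MeasureTheory Finset

theorem Finset.prod_Icc_one_sub_natCast {R : Type*} [CommRing R] (a : R) (n : ℕ) :
    ∏ j ∈ Icc 1 n, (a - j) = ∏ j ∈ range n, (a - 1 - j) := by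
  rw [← Ico_add_one_right_eq_Icc, prod_Ico_eq_prod_range, Nat.add_sub_cancel]
  refine prod_congr rfl fun j _ => ?_
  push_cast
  ring

namespace Complex

theorem integrableOn_cpow_mul_exp_neg_mul_Ioi {s : ℂ} {b : ℝ} (hs : -1 < s.re) (hb : 0 < b) :
    IntegrableOn (fun u : ℝ => (u : ℂ) ^ s * exp (-(b : ℂ) * u)) (Set.Ioi 0) := by
  have hreal : IntegrableOn (fun u : ℝ => u ^ s.re * Real.exp (-b * u)) (Set.Ioi 0) := by
    simpa only [Real.rpow_one] using integrableOn_rpow_mul_exp_neg_mul_rpow hs one_pos hb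
  refine hreal.mono' (by fun_prop) ?_
  filter_upwards [self_mem_ae_restrict measurableSet_Ioi] with u (hu : 0 < u)
  rw [norm_mul, norm_cpow_eq_rpow_re_of_pos hu, norm_exp]
  simp

theorem integral_cpow_mul_exp_neg_mul_Ioi_eq_Gamma {s : ℂ} {b : ℝ} (hs : -1 < s.re)
    (hb : 0 < b) :
    ∫ u in Set.Ioi (0 : ℝ), (u : ℂ) ^ s * exp (-(b : ℂ) * u) =
      Gamma (s + 1) * (b : ℂ) ^ (-(s + 1)) := by
  have hs' : 0 < (s + 1).re := by simp only [add_re, one_re]; linarith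
  rw [cpow_neg, ← inv_cpow_ofReal_nonneg hb.le, mul_comm]
  simpa only [neg_mul, add_sub_cancel_right, one_div] using integral_cpow_mul_exp_neg_mul_Ioi hs' hb

theorem Gamma_natCast_add_one_sub {α : ℂ} (hα : α.re < 1) (n : ℕ) :
    Gamma (n + 1 - α) = Gamma (1 - α) * ((-1) ^ n * ∏ j ∈ Icc 1 n, (α - j)) := by
  have hre : 0 < (1 - α).re := by simpa using hα
  have hpoch := Gamma_add_nat_div_Gamma_eq (n := n) (1 - α) fun k hk => by
    have := congrArg re hk
    simp only [sub_re, one_re, neg_re, natCast_re] at this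
    linarith [Nat.cast_nonneg (α := ℝ) k]
  rw [div_eq_iff (Gamma_ne_zero_of_re_pos hre)] at hpoch
  rw [show (n : ℂ) + 1 - α = 1 - α + n by ring, hpoch, show 1 - α = -(α - 1) by ring,
    ascPochhammer_eval_neg_eq_descPochhammer, descPochhammer_eval_eq_prod_range,
    prod_Icc_one_sub_natCast]
  ring

theorem add_one_pow_mul_cpow {z : ℂ} (hz : z ≠ 0) (r : ℕ) (s : ℂ) :
    (z + 1) ^ r * z ^ s = ∑ i ∈ range (r + 1), (r.choose i : ℂ) * z ^ ((i : ℂ) + s) := by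
  rw [add_pow, sum_mul]
  refine sum_congr rfl fun i _ => ?_
  rw [cpow_add _ _ hz, cpow_natCast]
  ring

end Complex

theorem stmt_9 (r : ℕ) (y : ℝ) (hy : 0 < y) (α : ℂ) (hα : α.re < 1) :
    IntegrableOn (fun u : ℝ =>
      ((u : ℂ) + 1) ^ r * (u : ℂ) ^ (-α) * Complex.exp (-(y : ℂ) * u)) (Set.Ioi 0) ∧
    (∫ u in Set.Ioi (0 : ℝ),
        ((u : ℂ) + 1) ^ r * (u : ℂ) ^ (-α) * Complex.exp (-(y : ℂ) * u)) =
      Complex.Gamma (1 - α) *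
        ∑ i ∈ Finset.range (r + 1),
          (-1 : ℂ) ^ i * (r.choose i : ℂ) * (∏ j ∈ Finset.Icc 1 i, (α - (j : ℂ))) *
            (y : ℂ) ^ (α - 1 - (i : ℂ)) := by
  have hre (i : ℕ) : -1 < ((i : ℂ) - α).re := by
    simp only [Complex.sub_re, Complex.natCast_re]
    linarith [Nat.cast_nonneg (α := ℝ) i]
  have hterm (i : ℕ) : IntegrableOn (fun u : ℝ =>
      (r.choose i : ℂ) * ((u : ℂ) ^ ((i : ℂ) - α) * Complex.exp (-(y : ℂ) * u)))
      (Set.Ioi 0) :=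
    (Complex.integrableOn_cpow_mul_exp_neg_mul_Ioi (hre i) hy).const_mul _
  have hexpand : Set.EqOn
      (fun u : ℝ => ((u : ℂ) + 1) ^ r * (u : ℂ) ^ (-α) * Complex.exp (-(y : ℂ) * u))
      (fun u : ℝ => ∑ i ∈ range (r + 1),
        (r.choose i : ℂ) * ((u : ℂ) ^ ((i : ℂ) - α) * Complex.exp (-(y : ℂ) * u)))
      (Set.Ioi 0) := fun u (hu : 0 < u) => by
    simp only [Complex.add_one_pow_mul_cpow (Complex.ofReal_ne_zero.2 hu.ne'), sum_mul,
      ← sub_eq_add_neg, mul_assoc]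
  refine ⟨IntegrableOn.congr_fun (integrable_finsetSum _ fun i _ => hterm i) hexpand.symm
    measurableSet_Ioi, ?_⟩
  rw [setIntegral_congr_fun measurableSet_Ioi hexpand, integral_finsetSum _ fun i _ => hterm i,
    mul_sum]
  refine sum_congr rfl fun i _ => ?_
  rw [integral_const_mul, Complex.integral_cpow_mul_exp_neg_mul_Ioi_eq_Gamma (hre i) hy,
    sub_add_eq_add_sub, Complex.Gamma_natCast_add_one_sub hα,
    show -((i : ℂ) + 1 - α) = α - 1 - i by ring]
  ring
end
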